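/- arXiv:2107.14279 — 4 statements merged into one kernel-verified Lean document; each statement's English description precedes it below -/
import Mathlib

section
/- A digraph Δ is isomorphic to an n-Cayley digraph of a finite group G (i.e., to Cay(G, T_{i,j} : i,j ∈ ℤ/nℤ) for some subsets T_{i,j} ⊆ G) if and only if Aut(Δ) contains a subgroup isomorphic to G acting semiregularly on the vertex set of Δ with exactly n orbits. -/
namespace PDR

/-- `σ` is an automorphism of the digraph `D`. -/
def IsDigraphAut {V : Type*} (D : Digraph V) (σ : Equiv.Perm V) : Prop :=
  ∀ u v : V, D.Adj (σ u) (σ v) ↔ D.Adj u v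

/-- The automorphism group of a digraph, as a subgroup of the symmetric group. -/
def digraphAut {V : Type*} (D : Digraph V) : Subgroup (Equiv.Perm V) where
  carrier := {σ | IsDigraphAut D σ}
  one_mem' := by intro u v; simp
  mul_mem' := by
    intro σ τ hσ hτ u v
    simpa [Equiv.Perm.mul_apply] using (hσ (τ u) (τ v)).trans (hτ u v)
  inv_mem' := by
    intro σ hσ u v
    simpa using (hσ (σ⁻¹ u) (σ⁻¹ v)).symm

/-- A digraph is regular if all vertices have the same out-valency and in-valency. -/
def IsRegularDigraph {V : Type*} (D : Digraph V) : Prop :=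
  ∃ d : ℕ, ∀ v : V, {u | D.Adj v u}.ncard = d ∧ {u | D.Adj u v}.ncard = d

/-- `D` is an `n`-partite digraphical representation of `G`: `D` is regular,
`Aut(D) ≅ G`, `Aut(D)` is semiregular with exactly `n` orbits, and each orbit
induces an empty sub-digraph. -/
def IsNPDR (G : Type*) [Group G] (n : ℕ) {V : Type*} (D : Digraph V) : Prop :=
  IsRegularDigraph D ∧
  Nonempty (G ≃* digraphAut D) ∧
  (∀ σ ∈ digraphAut D, ∀ v : V, σ v = v → σ = 1) ∧
  (∃ f : V → Fin n, Function.Surjective f ∧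
     ∀ u v : V, f u = f v ↔ ∃ σ ∈ digraphAut D, σ u = v) ∧
  (∀ u v : V, (∃ σ ∈ digraphAut D, σ u = v) → ¬ D.Adj u v)

/-- The `n`-Cayley digraph of `G` with connection sets `T i j`:
arcs `(g,i) → (t*g, j)` for `t ∈ T i j`. -/
def nCay (G : Type*) [Group G] (n : ℕ) (T : ZMod n → ZMod n → Set G) :
    Digraph (G × ZMod n) where
  Adj p q := q.1 * p.1⁻¹ ∈ T p.2 q.2

/-- Right translation `(x, i) ↦ (x·g, i)`. -/
def rtransl (G : Type*) [Group G] (n : ℕ) (g : G) : Equiv.Perm (G × ZMod n) :=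
  (Equiv.mulRight g).prodCongr (Equiv.refl (ZMod n))


/-- Sabidussi, generalised: a digraph is isomorphic to an `n`-Cayley
digraph of a finite group `G` iff its automorphism group contains a subgroup
isomorphic to `G` acting semiregularly with exactly `n` orbits. -/
theorem statement2 (G : Type) [Group G] [Finite G] (n : ℕ) (hn : 0 < n)
    {V : Type} (D : Digraph V) :
    (∃ T : ZMod n → ZMod n → Set G, ∃ e : V ≃ G × ZMod n,
       ∀ u v : V, D.Adj u v ↔ (nCay G n T).Adj (e u) (e v)) ↔
    (∃ H : Subgroup (Equiv.Perm V),
       (∀ σ ∈ H, IsDigraphAut D σ) ∧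
       Nonempty (G ≃* H) ∧
       (∀ σ ∈ H, ∀ v : V, σ v = v → σ = 1) ∧
       (∃ f : V → Fin n, Function.Surjective f ∧
          ∀ u v : V, f u = f v ↔ ∃ σ ∈ H, σ u = v)) := by
  constructor
  · rintro ⟨T, e, he⟩
    haveI : NeZero n := ⟨hn.ne'⟩
    let ψ : G →* Equiv.Perm V :=
      { toFun := fun g => e.trans ((rtransl G n g⁻¹).trans e.symm)
        map_one' := by
          ext v
          simp [rtransl]
        map_mul' := by
          intro g h
          ext v
          simp [rtransl, Equiv.Perm.mul_apply, Prod.map, mul_assoc] }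
    have hψ : ∀ g v, ψ g v = e.symm ((e v).1 * g⁻¹, (e v).2) := by
      intro g v
      rfl
    have hψinj : Function.Injective ψ := by
      intro g h hgh
      have := congrArg (fun σ : Equiv.Perm V => e (σ (e.symm (1, (0 : ZMod n))))) hgh
      simp only [hψ, Equiv.apply_symm_apply, Prod.mk.injEq, one_mul] at this
      have : g⁻¹ = h⁻¹ := this.1
      exact inv_injective this
    refine ⟨ψ.range, ?_, ⟨MonoidHom.ofInjective hψinj⟩, ?_, ?_⟩
    · rintro σ ⟨g, rfl⟩ u v
      rw [he u v, he (ψ g u) (ψ g v)]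
      simp only [hψ, nCay, Equiv.apply_symm_apply]
      constructor
      · intro h
        have : (e v).1 * g⁻¹ * ((e u).1 * g⁻¹)⁻¹ = (e v).1 * (e u).1⁻¹ := by
          group
        rwa [this] at h
      · intro h
        have : (e v).1 * g⁻¹ * ((e u).1 * g⁻¹)⁻¹ = (e v).1 * (e u).1⁻¹ := by
          group
        rwa [this]
    · rintro σ ⟨g, rfl⟩ v hv
      have : e (ψ g v) = e v := congrArg e hv
      rw [hψ, Equiv.apply_symm_apply] at this
      have hg : (e v).1 * g⁻¹ = (e v).1 := congrArg Prod.fst this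
      have : g = 1 := by
        have := mul_left_cancel ((hg.trans (mul_one _).symm))
        simpa using inv_injective (this.trans inv_one.symm)
      rw [this, map_one]
    · let q : ZMod n ≃ Fin n := Fintype.equivFinOfCardEq (ZMod.card n)
      refine ⟨fun v => q (e v).2, ?_, ?_⟩
      · intro k
        exact ⟨e.symm (1, q.symm k), by simp⟩
      · intro u v
        constructor
        · intro h
          have h2 : (e u).2 = (e v).2 := q.injective h
          refine ⟨ψ ((e v).1⁻¹ * (e u).1), ⟨_, rfl⟩, ?_⟩
          rw [hψ]
          have h1 : (e u).1 * ((e v).1⁻¹ * (e u).1)⁻¹ = (e v).1 := by group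
          rw [h1, h2, Prod.mk.eta, e.symm_apply_apply]
        · rintro ⟨σ, ⟨g, rfl⟩, rfl⟩
          simp [hψ]
  · rintro ⟨H, hAut, ⟨i⟩, hSemi, f, hf, horb⟩
    haveI : NeZero n := ⟨hn.ne'⟩
    let q : ZMod n ≃ Fin n := Fintype.equivFinOfCardEq (ZMod.card n)
    let rep : Fin n → V := Function.surjInv hf
    have hrep : ∀ k, f (rep k) = k := Function.surjInv_eq hf
    have hfinv : ∀ σ ∈ H, ∀ v : V, f (σ v) = f v := by
      intro σ hσ v
      exact ((horb v (σ v)).mpr ⟨σ, hσ, rfl⟩).symm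
    let m : G × ZMod n → V := fun p => ((i p.1⁻¹ : H) : Equiv.Perm V) (rep (q p.2))
    have hcomp : ∀ (a b : G) (x : V),
        ((i a : H) : Equiv.Perm V) (((i b : H) : Equiv.Perm V) x)
          = ((i (a * b) : H) : Equiv.Perm V) x := by
      intro a b x
      rw [map_mul]
      rfl
    have hone : ∀ x : V, ((i (1 : G) : H) : Equiv.Perm V) x = x := by
      intro x
      rw [map_one]
      rfl
    have hfm : ∀ p : G × ZMod n, f (m p) = q p.2 := by
      intro p
      rw [hfinv _ (SetLike.coe_mem _) _, hrep]
    have hminj : Function.Injective m := by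
      rintro ⟨g, k⟩ ⟨h, l⟩ hmm
      have hk : k = l := by
        have := (hfm (g, k)).symm.trans ((congrArg f hmm).trans (hfm (h, l)))
        exact q.injective this
      subst hk
      have hfix : ((i (h⁻¹⁻¹ * g⁻¹) : H) : Equiv.Perm V) (rep (q k)) = rep (q k) := by
        rw [← hcomp]
        have : ((i g⁻¹ : H) : Equiv.Perm V) (rep (q k)) = ((i h⁻¹ : H) : Equiv.Perm V) (rep (q k)) := hmm
        rw [this, hcomp, inv_mul_cancel, hone]
      have := hSemi _ (SetLike.coe_mem _) _ hfix
      have h1 : (i (h⁻¹⁻¹ * g⁻¹) : H) = 1 := by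
        exact_mod_cast Subtype.ext this
      have h2 : h⁻¹⁻¹ * g⁻¹ = 1 := i.injective (h1.trans (map_one i).symm)
      rw [inv_inv] at h2
      exact Prod.ext (mul_inv_eq_one.mp h2).symm rfl
    have hmsurj : Function.Surjective m := by
      intro v
      obtain ⟨σ, hσ, hσv⟩ := (horb (rep (f v)) v).mp (hrep (f v))
      refine ⟨((i.symm ⟨σ, hσ⟩)⁻¹, q.symm (f v)), ?_⟩
      show ((i (i.symm ⟨σ, hσ⟩)⁻¹⁻¹ : H) : Equiv.Perm V) (rep (q (q.symm (f v)))) = v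
      rw [inv_inv, MulEquiv.apply_symm_apply, Equiv.apply_symm_apply]
      exact hσv
    let eq := Equiv.ofBijective m ⟨hminj, hmsurj⟩
    refine ⟨fun p r => {t : G | D.Adj (m (1, p)) (m (t, r))}, eq.symm, ?_⟩
    intro u v
    have hu : m (eq.symm u) = u := eq.apply_symm_apply u
    have hv : m (eq.symm v) = v := eq.apply_symm_apply v
    set p := eq.symm u with hp
    set r := eq.symm v with hr
    have key : ∀ w : G × ZMod n,
        ((i p.1 : H) : Equiv.Perm V) (m w) = m (w.1 * p.1⁻¹, w.2) := by
      rintro ⟨g, k⟩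
      show ((i p.1 : H) : Equiv.Perm V) (((i g⁻¹ : H) : Equiv.Perm V) (rep (q k)))
        = ((i (g * p.1⁻¹)⁻¹ : H) : Equiv.Perm V) (rep (q k))
      rw [hcomp]
      congr 2
      group
    have haut := hAut _ (SetLike.coe_mem (i p.1)) u v
    rw [← hu, ← hv] at haut ⊢
    rw [← haut, key p, key r]
    show D.Adj (m (p.1 * p.1⁻¹, p.2)) (m (r.1 * p.1⁻¹, r.2)) ↔ _
    rw [mul_inv_cancel]
    exact Iff.rfl


end PDR
end

section
/- Fix n ≥ 3 and let G = ℤ/2ℤ × ℤ/2ℤ = ⟨a⟩ × ⟨b⟩. Define the n-Cayley digraph Γ on G × ℤ/nℤ with T_{i,i+1} = T_{i+1,i} = {1} for i ∈ ℤ/nℤ \ {0,1}, T_{0,1} = {1}, T_{1,0} = {a}, T_{1,2} = {b}, T_{2,1} = {a}, and all other T_{j,k} = ∅. Then Aut(Γ) is exactly the group of right translations by G, so ℤ/2ℤ × ℤ/2ℤ admits an n-partite digraphical representation for every n ≥ 3. -/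
/-! Arcs in both directions join `(g, i)` and `(g, i + 1)` exactly when `i ∉ {0, 1}`, so the
digons form four disjoint paths `(g, 2), (g, 3), …, (g, 0)`, and layer `1` meets no digon.
An automorphism permutes these paths, so it maps layer `1` to itself and path ends to path ends.
It cannot swap the two ends of a path: the layer-`1` out-neighbour `(g, 1)` of `(g, 0)` differs
from the layer-`1` in-neighbour `(b g, 1)` of `(g, 2)`, whereas for `(h, 2)` and `(h, 0)` both are
`(a h, 1)`. Hence every automorphism has the form `(g, i) ↦ (φ g, i)`, and the arcs
`(g, 1) → (a g, 0)` and `(g, 1) → (b g, 2)` make `φ` commute with left multiplication by the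
generators `a`, `b`, so `φ` is a right translation. -/

namespace PDR

/-- The group `ℤ/2ℤ × ℤ/2ℤ` (written multiplicatively) and its generators. -/
abbrev GV4 := Multiplicative (ZMod 2 × ZMod 2)
def aV4 : GV4 := Multiplicative.ofAdd (1, 0)
def bV4 : GV4 := Multiplicative.ofAdd (0, 1)

/-- Connection sets: `T i (i+1) = T (i+1) i = {1}` for `i ∉ {0,1}`, `T 0 1 = {1}`,
`T 1 0 = {a}`, `T 1 2 = {b}`, `T 2 1 = {a}`, all others empty. -/
def T6 (n : ℕ) : ZMod n → ZMod n → Set GV4 := fun i j =>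
  if (j = i + 1 ∧ i ≠ 0 ∧ i ≠ 1) ∨ (i = j + 1 ∧ j ≠ 0 ∧ j ≠ 1) then {1}
  else if i = 0 ∧ j = 1 then {1}
  else if i = 1 ∧ j = 0 then {aV4}
  else if i = 1 ∧ j = 2 then {bV4}
  else if i = 2 ∧ j = 1 then {aV4}
  else ∅

end PDR

lemma ZMod.natCast_ne_natCast_of_lt {n a b : ℕ} (hba : b < a) (ha : a < n) :
    (a : ZMod n) ≠ b := by
  rw [Ne, ZMod.natCast_eq_natCast_iff', Nat.mod_eq_of_lt ha, Nat.mod_eq_of_lt (hba.trans ha)]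
  exact hba.ne'

lemma ZMod.natCast_self_sub {n k : ℕ} (hk : k ≤ n) : ((n - k : ℕ) : ZMod n) = -k := by
  rw [Nat.cast_sub hk, ZMod.natCast_self, zero_sub]

lemma ZMod.exists_eq_neg_natCast_of_ne_one {n : ℕ} [NeZero n] {i : ZMod n} (hi : i ≠ 1) :
    ∃ k ≤ n - 2, i = -(k : ZMod n) := by
  refine ⟨(-i).val, ?_, by rw [ZMod.natCast_zmod_val, neg_neg]⟩
  have hne : (-i).val ≠ n - 1 := fun h => hi <| by
    rw [← neg_neg i, ← ZMod.natCast_zmod_val (-i), h, ZMod.natCast_self_sub NeZero.one_le,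
      Nat.cast_one, neg_neg]
  have := ZMod.val_lt (-i)
  omega

lemma SimpleGraph.Iso.exists_adj_iff {V W : Type*} {G : SimpleGraph V} {G' : SimpleGraph W}
    (e : G ≃g G') (v : V) : (∃ w, G'.Adj (e v) w) ↔ ∃ w, G.Adj v w :=
  (e.toEquiv.exists_congr fun _ => e.map_adj_iff.symm).symm

lemma SimpleGraph.Iso.existsUnique_adj_iff {V W : Type*} {G : SimpleGraph V}
    {G' : SimpleGraph W} (e : G ≃g G') (v : V) : (∃! w, G'.Adj (e v) w) ↔ ∃! w, G.Adj v w :=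
  (e.toEquiv.existsUnique_congr fun _ => e.map_adj_iff.symm).symm

/-- At each step the only alternative to `y (k + 2)` is `y k`, the image of the vertex two steps
back, which injectivity excludes. -/
theorem SimpleGraph.Embedding.apply_path_eq {V W : Type*} {G : SimpleGraph V}
    {G' : SimpleGraph W} (f : G ↪g G') {m : ℕ} {x : ℕ → V} {y : ℕ → W}
    (hx : ∀ k < m, G.Adj (x k) (x (k + 1))) (hx₂ : ∀ k, k + 2 ≤ m → x (k + 2) ≠ x k)
    (hy₀ : ∀ w, G'.Adj (y 0) w → w = y 1)
    (hy : ∀ k, k + 2 ≤ m → ∀ w, G'.Adj (y (k + 1)) w → w = y k ∨ w = y (k + 2))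
    (h₀ : f (x 0) = y 0) : ∀ k ≤ m, f (x k) = y k := by
  suffices H : ∀ k ≤ m, f (x k) = y k ∧ (k + 1 ≤ m → f (x (k + 1)) = y (k + 1)) from
    fun k hk => (H k hk).1
  intro k
  induction k with
  | zero => exact fun _ => ⟨h₀, fun h₁ => hy₀ _ (h₀ ▸ f.map_adj_iff.mpr (hx 0 h₁))⟩
  | succ k ih =>
    intro hk
    obtain ⟨hk₀, hk₁⟩ := ih (by omega)
    refine ⟨hk₁ hk, fun hk₂ => ?_⟩
    have hadj := hk₁ hk ▸ f.map_adj_iff.mpr (hx (k + 1) hk₂)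
    refine (hy k hk₂ _ hadj).resolve_left fun h => hx₂ k hk₂ (f.injective ?_)
    rw [h, hk₀]

lemma eq_mul_map_one_of_map_mul {G : Type*} [Group G] {S : Set G}
    (hS : Subgroup.closure S = ⊤) {φ : G → G} (hφ : ∀ s ∈ S, ∀ g, φ (s * g) = s * φ g)
    (g : G) : φ g = g * φ 1 := by
  have hmem : g ∈ Subgroup.closure S := hS ▸ Subgroup.mem_top g
  suffices H : ∀ t ∈ Subgroup.closure S, ∀ g, φ (t * g) = t * φ g by simpa using H g hmem 1
  intro t ht
  induction ht using Subgroup.closure_induction with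
  | mem s hs => exact hφ s hs
  | one => simp
  | mul s t _ _ hs ht => intro g; rw [mul_assoc, hs, ht, mul_assoc]
  | inv s _ hs => intro g; rw [eq_inv_mul_iff_mul_eq, ← hs, mul_inv_cancel_left]

namespace PDR

def IsDigraphAut.strictIso {V : Type*} {D : Digraph V} {σ : Equiv.Perm V}
    (hσ : IsDigraphAut D σ) : D.toSimpleGraphStrict ≃g D.toSimpleGraphStrict where
  toEquiv := σ
  map_rel_iff' {u v} := by
    simp only [Digraph.toSimpleGraphStrict, ne_eq, EmbeddingLike.apply_eq_iff_eq, hσ u v, hσ v u]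

@[simp]
lemma IsDigraphAut.strictIso_apply {V : Type*} {D : Digraph V} {σ : Equiv.Perm V}
    (hσ : IsDigraphAut D σ) (v : V) : hσ.strictIso v = σ v := rfl

section nCay

variable {G : Type*} [Group G] {n : ℕ} {T : ZMod n → ZMod n → Set G}

@[simp]
lemma rtransl_apply (g : G) (v : G × ZMod n) : rtransl G n g v = (v.1 * g, v.2) := rfl

lemma rtransl_isDigraphAut (g : G) : IsDigraphAut (nCay G n T) (rtransl G n g) := by
  rintro ⟨x, i⟩ ⟨y, j⟩
  change y * g * (x * g)⁻¹ ∈ T i j ↔ y * x⁻¹ ∈ T i j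
  rw [mul_inv_rev, mul_assoc, mul_inv_cancel_left]

lemma map_mul_of_isDigraphAut_nCay {σ : Equiv.Perm (G × ZMod n)}
    (hσ : IsDigraphAut (nCay G n T) σ) {φ : G → G} (hφ : ∀ g i, σ (g, i) = (φ g, i))
    {i j : ZMod n} {t : G} (ht : T i j = {t}) (g : G) : φ (t * g) = t * φ g := by
  have := hσ (g, i) (t * g, j)
  rw [hφ, hφ] at this
  change φ (t * g) * (φ g)⁻¹ ∈ T i j ↔ t * g * g⁻¹ ∈ T i j at this
  rw [ht, mul_inv_cancel_right, Set.mem_singleton_iff, Set.mem_singleton_iff,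
    mul_inv_eq_iff_eq_mul] at this
  exact this.mpr rfl

-- `g ↦ rtransl G n g` reverses products, hence the inverse.
variable (T) in
def rtranslHom : G →* digraphAut (nCay G n T) where
  toFun g := ⟨rtransl G n g⁻¹, rtransl_isDigraphAut g⁻¹⟩
  map_one' := by ext ⟨x, i⟩ <;> simp
  map_mul' g h := by ext ⟨x, i⟩ <;> simp [mul_assoc]

theorem isNPDR_nCay [NeZero n] (hreg : IsRegularDigraph (nCay G n T)) (hT : ∀ i, T i i = ∅)
    (haut : ∀ σ, IsDigraphAut (nCay G n T) σ ↔ ∃ g : G, σ = rtransl G n g) :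
    IsNPDR G n (nCay G n T) := by
  have horbit (u v : G × ZMod n) : (∃ σ ∈ digraphAut (nCay G n T), σ u = v) ↔ u.2 = v.2 := by
    refine ⟨fun ⟨σ, hσ, huv⟩ => ?_, fun h => ?_⟩
    · obtain ⟨g, rfl⟩ := (haut σ).mp hσ
      rw [← huv, rtransl_apply]
    · exact ⟨rtransl G n (u.1⁻¹ * v.1), rtransl_isDigraphAut _, by simp [h]⟩
  refine ⟨hreg, ⟨MulEquiv.ofBijective (rtranslHom T) ⟨fun g h hgh => ?_, fun ⟨σ, hσ⟩ => ?_⟩⟩,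
    fun σ hσ v hv => ?_, ⟨fun v => (ZMod.finEquiv n).symm v.2, fun k => ?_, fun u v => ?_⟩,
    fun u v huv => ?_⟩
  · simpa [rtranslHom] using congrArg (fun σ : digraphAut _ => (σ.1 (1, 0)).1) hgh
  · obtain ⟨g, rfl⟩ := (haut σ).mp hσ
    exact ⟨g⁻¹, by simp [rtranslHom]⟩
  · obtain ⟨g, rfl⟩ := (haut σ).mp hσ
    obtain rfl : g = 1 := mul_eq_left.mp (congrArg Prod.fst hv)
    ext ⟨x, i⟩ <;> simp
  · exact ⟨(1, ZMod.finEquiv n k), by simp⟩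
  · rw [horbit, (ZMod.finEquiv n).symm.injective.eq_iff]
  · change v.1 * u.1⁻¹ ∉ T u.2 v.2
    rw [(horbit u v).mp huv, hT]
    exact Set.notMem_empty _

end nCay

lemma closure_aV4_bV4 : Subgroup.closure {aV4, bV4} = ⊤ := by
  have ha : aV4 ∈ Subgroup.closure {aV4, bV4} := Subgroup.subset_closure (by simp)
  have hb : bV4 ∈ Subgroup.closure {aV4, bV4} := Subgroup.subset_closure (by simp)
  have hV4 : ∀ x : GV4, x = 1 ∨ x = aV4 ∨ x = bV4 ∨ x = aV4 * bV4 := by decide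
  refine eq_top_iff.mpr fun x _ => ?_
  obtain rfl | rfl | rfl | rfl := hV4 x
  exacts [one_mem _, ha, hb, mul_mem ha hb]

namespace T6

variable {n : ℕ}

local notation "Γ" => nCay GV4 n (T6 n)
local notation "Δ" => Digraph.toSimpleGraphStrict (nCay GV4 n (T6 n))

lemma zmod_one_two_ne (hn : 3 ≤ n) :
    (1 : ZMod n) ≠ 0 ∧ (2 : ZMod n) ≠ 0 ∧ (2 : ZMod n) ≠ 1 := by
  refine ⟨?_, ?_, ?_⟩
  · exact_mod_cast ZMod.natCast_ne_natCast_of_lt (a := 1) (b := 0) one_pos (by omega)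
  · exact_mod_cast ZMod.natCast_ne_natCast_of_lt (a := 2) (b := 0) two_pos (by omega)
  · exact_mod_cast ZMod.natCast_ne_natCast_of_lt (a := 2) (b := 1) one_lt_two (by omega)

def upConn (i : ZMod n) : GV4 := if i = 1 then bV4 else 1

def downConn (i : ZMod n) : GV4 := if i = 1 ∨ i = 2 then aV4 else 1

lemma mem_iff (hn : 3 ≤ n) {t : GV4} {i j : ZMod n} :
    t ∈ T6 n i j ↔ (j = i + 1 ∧ t = upConn i) ∨ (j = i - 1 ∧ t = downConn i) := by
  obtain ⟨-, h20, -⟩ := zmod_one_two_ne hn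
  unfold T6 upConn downConn
  split_ifs <;> simp only [Set.mem_singleton_iff, Set.mem_empty_iff_false] <;> grind

lemma apply_self (hn : 3 ≤ n) (i : ZMod n) : T6 n i i = ∅ := by
  obtain ⟨h10, -, -⟩ := zmod_one_two_ne hn
  refine Set.eq_empty_of_forall_notMem fun t ht => ?_
  rcases (mem_iff hn).mp ht with ⟨h, -⟩ | ⟨h, -⟩
  exacts [h10 (by linear_combination -h), h10 (by linear_combination h)]

lemma apply_one_zero (hn : 3 ≤ n) : T6 n 1 0 = {aV4} := by
  obtain ⟨-, h20, -⟩ := zmod_one_two_ne hn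
  ext t
  rw [mem_iff hn, Set.mem_singleton_iff]
  simp [downConn, one_add_one_eq_two, h20.symm]

lemma apply_one_two (hn : 3 ≤ n) : T6 n 1 2 = {bV4} := by
  obtain ⟨-, h20, -⟩ := zmod_one_two_ne hn
  ext t
  rw [mem_iff hn, Set.mem_singleton_iff]
  simp [upConn, one_add_one_eq_two, h20]

lemma adj_iff (hn : 3 ≤ n) {u v : GV4 × ZMod n} :
    (Γ).Adj u v ↔
      (v.2 = u.2 + 1 ∧ v.1 = upConn u.2 * u.1) ∨ (v.2 = u.2 - 1 ∧ v.1 = downConn u.2 * u.1) := by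
  change v.1 * u.1⁻¹ ∈ T6 n u.2 v.2 ↔ _
  simp only [mem_iff hn, mul_inv_eq_iff_eq_mul]

lemma setOf_adj_eq (hn : 3 ≤ n) (g : GV4) (i : ZMod n) :
    {v | (Γ).Adj (g, i) v} = {(upConn i * g, i + 1), (downConn i * g, i - 1)} := by
  ext ⟨h, j⟩
  simp only [Set.mem_ofPred_eq, adj_iff hn, Set.mem_insert_iff, Set.mem_singleton_iff,
    Prod.mk.injEq]
  tauto

lemma setOf_adj_eq' (hn : 3 ≤ n) (h : GV4) (j : ZMod n) :
    {u | (Γ).Adj u (h, j)} =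
      {((upConn (j - 1))⁻¹ * h, j - 1), ((downConn (j + 1))⁻¹ * h, j + 1)} := by
  ext ⟨g, i⟩
  simp only [Set.mem_ofPred_eq, adj_iff hn, Set.mem_insert_iff, Set.mem_singleton_iff,
    Prod.mk.injEq, eq_inv_mul_iff_mul_eq]
  grind

lemma isRegularDigraph (hn : 3 ≤ n) : IsRegularDigraph Γ := by
  obtain ⟨-, h20, -⟩ := zmod_one_two_ne hn
  refine ⟨2, fun ⟨g, i⟩ => ⟨?_, ?_⟩⟩
  · rw [setOf_adj_eq hn]
    exact Set.ncard_pair fun h => h20 (by linear_combination (Prod.mk.inj h).2)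
  · rw [setOf_adj_eq' hn]
    exact Set.ncard_pair fun h => h20 (by linear_combination -(Prod.mk.inj h).2)

lemma digon_adj_iff (hn : 3 ≤ n) {g h : GV4} {i j : ZMod n} :
    (Δ).Adj (g, i) (h, j) ↔
      h = g ∧ ((j = i + 1 ∧ i ≠ 0 ∧ i ≠ 1) ∨ (j = i - 1 ∧ i ≠ 1 ∧ i ≠ 2)) := by
  obtain ⟨h10, h20, -⟩ := zmod_one_two_ne hn
  have ha : aV4 ≠ 1 := by decide
  have hb : bV4 ≠ 1 := by decide
  have hab : aV4 * bV4 ≠ 1 := by decide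
  simp only [Digraph.toSimpleGraphStrict, adj_iff hn]
  constructor
  · rintro ⟨-, (⟨rfl, rfl⟩ | ⟨rfl, rfl⟩), hback⟩ <;>
      simp only [← mul_assoc, right_eq_mul, mul_eq_right, upConn, downConn] at hback ⊢ <;> grind
  · rintro ⟨rfl, (⟨rfl, hi⟩ | ⟨rfl, hi⟩)⟩ <;> simp [upConn, downConn] <;> grind

lemma digon_adj_zero (hn : 3 ≤ n) {g : GV4} {w : GV4 × ZMod n} :
    (Δ).Adj (g, 0) w ↔ w = (g, -1) := by
  obtain ⟨h10, h20, -⟩ := zmod_one_two_ne hn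
  obtain ⟨h, j⟩ := w
  rw [digon_adj_iff hn, Prod.mk.injEq]
  grind

lemma digon_adj_two (hn : 3 ≤ n) {g : GV4} {w : GV4 × ZMod n} :
    (Δ).Adj (g, 2) w ↔ w = (g, 3) := by
  obtain ⟨-, h20, h21⟩ := zmod_one_two_ne hn
  obtain ⟨h, j⟩ := w
  rw [digon_adj_iff hn, Prod.mk.injEq]
  grind

lemma digon_adj_of_ne (hn : 3 ≤ n) {g : GV4} {i : ZMod n} (hi0 : i ≠ 0) (hi1 : i ≠ 1)
    (hi2 : i ≠ 2) {w : GV4 × ZMod n} : (Δ).Adj (g, i) w ↔ w = (g, i + 1) ∨ w = (g, i - 1) := by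
  obtain ⟨h, j⟩ := w
  rw [digon_adj_iff hn, Prod.mk.injEq, Prod.mk.injEq]
  grind

lemma exists_digon_adj_iff (hn : 3 ≤ n) {v : GV4 × ZMod n} :
    (∃ w, (Δ).Adj v w) ↔ v.2 ≠ 1 := by
  obtain ⟨-, h20, -⟩ := zmod_one_two_ne hn
  obtain ⟨g, i⟩ := v
  simp only [Prod.exists, digon_adj_iff hn]
  grind

lemma existsUnique_digon_adj_iff (hn : 3 ≤ n) {v : GV4 × ZMod n} :
    (∃! w, (Δ).Adj v w) ↔ v.2 = 0 ∨ v.2 = 2 := by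
  obtain ⟨-, h20, -⟩ := zmod_one_two_ne hn
  obtain ⟨g, i⟩ := v
  by_cases hi0 : i = 0
  · subst hi0; simp [digon_adj_zero hn]
  by_cases hi2 : i = 2
  · subst hi2; simp [digon_adj_two hn]
  simp only [hi0, hi2, or_self, iff_false]
  by_cases hi1 : i = 1
  · exact fun h => (exists_digon_adj_iff hn).mp h.exists hi1
  rintro ⟨w, -, huniq⟩
  have hup := huniq (g, i + 1) ((digon_adj_of_ne hn hi0 hi1 hi2).mpr (Or.inl rfl))
  have hdown := huniq (g, i - 1) ((digon_adj_of_ne hn hi0 hi1 hi2).mpr (Or.inr rfl))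
  have : i + 1 = i - 1 := congrArg Prod.snd (hup.trans hdown.symm)
  exact h20 (by linear_combination this)

lemma digon_adj_neg_natCast (g : GV4) {k : ℕ} (hk : k + 2 < n) :
    (Δ).Adj (g, -(k : ZMod n)) (g, -((k + 1 : ℕ) : ZMod n)) := by
  have h1 := ZMod.natCast_ne_natCast_of_lt (n := n) (a := k + 1) (b := 0) (by omega) (by omega)
  have h2 := ZMod.natCast_ne_natCast_of_lt (n := n) (a := k + 2) (b := 0) (by omega) (by omega)
  push_cast at h1 h2 ⊢
  rw [digon_adj_iff (by omega)]
  grind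

lemma digon_adj_neg_natCast_succ_iff (g : GV4) {k : ℕ} (hk : k + 4 ≤ n) {w : GV4 × ZMod n} :
    (Δ).Adj (g, -((k + 1 : ℕ) : ZMod n)) w ↔
      w = (g, -(k : ZMod n)) ∨ w = (g, -((k + 2 : ℕ) : ZMod n)) := by
  have h1 := ZMod.natCast_ne_natCast_of_lt (n := n) (a := k + 1) (b := 0) (by omega) (by omega)
  have h2 := ZMod.natCast_ne_natCast_of_lt (n := n) (a := k + 2) (b := 0) (by omega) (by omega)
  have h3 := ZMod.natCast_ne_natCast_of_lt (n := n) (a := k + 3) (b := 0) (by omega) (by omega)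
  push_cast at h1 h2 h3 ⊢
  rw [digon_adj_of_ne (by omega) (fun h => h1 (by linear_combination -h))
    (fun h => h2 (by linear_combination -h)) (fun h => h3 (by linear_combination -h))]
  ring_nf

lemma digon_adj_two_add_natCast_succ_iff (g : GV4) {k : ℕ} (hk : k + 4 ≤ n)
    {w : GV4 × ZMod n} :
    (Δ).Adj (g, 2 + ((k + 1 : ℕ) : ZMod n)) w ↔
      w = (g, 2 + (k : ZMod n)) ∨ w = (g, 2 + ((k + 2 : ℕ) : ZMod n)) := by
  have h1 := ZMod.natCast_ne_natCast_of_lt (n := n) (a := k + 1) (b := 0) (by omega) (by omega)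
  have h2 := ZMod.natCast_ne_natCast_of_lt (n := n) (a := k + 2) (b := 0) (by omega) (by omega)
  have h3 := ZMod.natCast_ne_natCast_of_lt (n := n) (a := k + 3) (b := 0) (by omega) (by omega)
  push_cast at h1 h2 h3 ⊢
  rw [digon_adj_of_ne (by omega) (fun h => h3 (by linear_combination h))
    (fun h => h2 (by linear_combination h)) (fun h => h1 (by linear_combination h))]
  ring_nf
  exact or_comm

lemma neg_natCast_add_two_ne (hn : 3 ≤ n) (k : ℕ) :
    -((k + 2 : ℕ) : ZMod n) ≠ -(k : ZMod n) := by
  obtain ⟨-, h20, -⟩ := zmod_one_two_ne hn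
  push_cast
  exact fun h => h20 (by linear_combination -h)

section Automorphism

variable {σ : Equiv.Perm (GV4 × ZMod n)}

lemma snd_apply_eq_one_iff (hn : 3 ≤ n) (hσ : IsDigraphAut Γ σ) (v : GV4 × ZMod n) :
    (σ v).2 = 1 ↔ v.2 = 1 := by
  have := SimpleGraph.Iso.exists_adj_iff hσ.strictIso v
  rwa [exists_digon_adj_iff hn, exists_digon_adj_iff hn, ne_eq, ne_eq, not_iff_not] at this

lemma snd_apply_zero (hn : 3 ≤ n) (hσ : IsDigraphAut Γ σ) (g : GV4) :
    (σ (g, 0)).2 = 0 ∨ (σ (g, 0)).2 = 2 := by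
  rw [← existsUnique_digon_adj_iff hn]
  exact (SimpleGraph.Iso.existsUnique_adj_iff hσ.strictIso _).mpr
    ((existsUnique_digon_adj_iff hn).mpr (.inl rfl))

-- The digon path starting at `(g, 0)` visits the layers `-k` for `k ≤ n - 2`, ending at layer `2`.
lemma apply_neg_natCast_of_apply_zero_eq_zero (hn : 3 ≤ n) (hσ : IsDigraphAut Γ σ)
    {g h : GV4} (h₀ : σ (g, 0) = (h, 0)) :
    ∀ k ≤ n - 2, σ (g, -(k : ZMod n)) = (h, -(k : ZMod n)) :=
  SimpleGraph.Embedding.apply_path_eq hσ.strictIso.toEmbedding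
    (x := fun k => (g, -(k : ZMod n))) (y := fun k => (h, -(k : ZMod n)))
    (fun _ hk => digon_adj_neg_natCast g (by omega))
    (fun k _ => by simpa using neg_natCast_add_two_ne hn k)
    (fun _ hw => by simpa using (digon_adj_zero hn).mp (by simpa using hw))
    (fun _ hk _ => (digon_adj_neg_natCast_succ_iff h (by omega)).mp)
    (by simpa using h₀)

lemma apply_neg_natCast_of_apply_zero_eq_two (hn : 3 ≤ n) (hσ : IsDigraphAut Γ σ)
    {g h : GV4} (h₀ : σ (g, 0) = (h, 2)) :
    ∀ k ≤ n - 2, σ (g, -(k : ZMod n)) = (h, 2 + (k : ZMod n)) :=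
  SimpleGraph.Embedding.apply_path_eq hσ.strictIso.toEmbedding
    (x := fun k => (g, -(k : ZMod n))) (y := fun k => (h, 2 + (k : ZMod n)))
    (fun _ hk => digon_adj_neg_natCast g (by omega))
    (fun k _ => by simpa using neg_natCast_add_two_ne hn k)
    (fun w hw => by
      obtain rfl : w = (h, 3) := (digon_adj_two hn).mp (by simpa using hw)
      norm_num)
    (fun _ hk _ => (digon_adj_two_add_natCast_succ_iff h (by omega)).mp)
    (by simpa using h₀)

lemma apply_zero_ne_two (hn : 3 ≤ n) (hσ : IsDigraphAut Γ σ) (g h : GV4) :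
    σ (g, 0) ≠ (h, 2) := by
  obtain ⟨h10, h20, -⟩ := zmod_one_two_ne hn
  intro h₀
  have h₂ : σ (g, 2) = (h, 0) := by
    have := apply_neg_natCast_of_apply_zero_eq_two hn hσ h₀ (n - 2) le_rfl
    rwa [ZMod.natCast_self_sub (by omega), Nat.cast_ofNat, neg_neg, add_neg_cancel] at this
  have h₁ : σ (g, 1) = (aV4 * h, 1) := by
    have hadj := (hσ (g, 0) (g, 1)).mpr
      ((adj_iff hn).mpr (.inl ⟨by ring, by simp [upConn, h10.symm]⟩))
    rw [h₀, adj_iff hn] at hadj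
    have hlayer := (snd_apply_eq_one_iff hn hσ (g, 1)).mpr rfl
    refine Prod.ext ?_ hlayer
    rcases hadj with ⟨hj, -⟩ | ⟨-, hu⟩
    · exact absurd (hlayer ▸ hj) fun h => h20 (by linear_combination -h)
    · simpa [downConn] using hu
  have h₁' : σ (bV4 * g, 1) = (aV4 * h, 1) := by
    have hadj := (hσ (bV4 * g, 1) (g, 2)).mpr ((adj_iff hn).mpr (.inl ⟨by ring, by
      simp [upConn, ← mul_assoc, show bV4 * bV4 = 1 by decide]⟩))
    rw [h₂, adj_iff hn] at hadj
    have hlayer := (snd_apply_eq_one_iff hn hσ (bV4 * g, 1)).mpr rfl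
    refine Prod.ext ?_ hlayer
    rcases hadj with ⟨hj, -⟩ | ⟨-, hu⟩
    · exact absurd (hlayer ▸ hj) fun h => h20 (by linear_combination -h)
    · simp only [hlayer, downConn, true_or, if_true] at hu
      rw [hu, ← mul_assoc, show aV4 * aV4 = 1 by decide, one_mul]
  have := congrArg Prod.fst (σ.injective (h₁'.trans h₁.symm))
  exact absurd (mul_eq_right.mp this) (by decide)

lemma apply_eq_of_apply_zero (hn : 3 ≤ n) (hσ : IsDigraphAut Γ σ) {g h : GV4}
    (h₀ : σ (g, 0) = (h, 0)) (i : ZMod n) : σ (g, i) = (h, i) := by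
  have : NeZero n := ⟨by omega⟩
  obtain ⟨h10, h20, -⟩ := zmod_one_two_ne hn
  by_cases hi : i = 1
  · subst hi
    have hadj := (hσ (g, 0) (g, 1)).mpr
      ((adj_iff hn).mpr (.inl ⟨by ring, by simp [upConn, h10.symm]⟩))
    rw [h₀, adj_iff hn] at hadj
    have hlayer := (snd_apply_eq_one_iff hn hσ (g, 1)).mpr rfl
    refine Prod.ext ?_ hlayer
    rcases hadj with ⟨-, hu⟩ | ⟨hj, -⟩
    · simpa [upConn, h10.symm] using hu
    · have : (1 : ZMod n) = 0 - 1 := by rwa [hlayer] at hj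
      exact (h20 (by linear_combination this)).elim
  · obtain ⟨k, hk, rfl⟩ := ZMod.exists_eq_neg_natCast_of_ne_one hi
    exact apply_neg_natCast_of_apply_zero_eq_zero hn hσ h₀ k hk

end Automorphism

theorem isDigraphAut_iff (hn : 3 ≤ n) (σ : Equiv.Perm (GV4 × ZMod n)) :
    IsDigraphAut Γ σ ↔ ∃ g : GV4, σ = rtransl GV4 n g := by
  refine ⟨fun hσ => ?_, by rintro ⟨g, rfl⟩; exact rtransl_isDigraphAut g⟩
  have h₀ (g : GV4) : σ (g, 0) = ((σ (g, 0)).1, 0) := Prod.ext rfl <|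
    (snd_apply_zero hn hσ g).resolve_right fun h₂ => apply_zero_ne_two hn hσ g _ (Prod.ext rfl h₂)
  set φ : GV4 → GV4 := fun g => (σ (g, 0)).1
  have hφ (g : GV4) (i : ZMod n) : σ (g, i) = (φ g, i) := apply_eq_of_apply_zero hn hσ (h₀ g) i
  have hφ_mul : ∀ s ∈ ({aV4, bV4} : Set GV4), ∀ g, φ (s * g) = s * φ g := by
    rintro s (rfl | rfl)
    exacts [map_mul_of_isDigraphAut_nCay hσ hφ (apply_one_zero hn),
      map_mul_of_isDigraphAut_nCay hσ hφ (apply_one_two hn)]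
  refine ⟨φ 1, Equiv.ext fun ⟨g, i⟩ => ?_⟩
  rw [hφ, eq_mul_map_one_of_map_mul closure_aV4_bV4 hφ_mul g, rtransl_apply]

end T6

/-- for `n ≥ 3` the automorphism group of the digraph above is exactly
the group of right translations by `ℤ/2ℤ × ℤ/2ℤ`, which therefore admits an
`n`-partite digraphical representation for every `n ≥ 3`. -/
theorem statement6 (n : ℕ) (hn : 3 ≤ n) :
    (∀ σ : Equiv.Perm (GV4 × ZMod n),
       IsDigraphAut (nCay GV4 n (T6 n)) σ ↔ ∃ g : GV4, σ = rtransl GV4 n g) ∧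
    IsNPDR GV4 n (nCay GV4 n (T6 n)) := by
  have : NeZero n := ⟨by omega⟩
  exact ⟨T6.isDigraphAut_iff hn,
    isNPDR_nCay (T6.isRegularDigraph hn) (T6.apply_self hn) (T6.isDigraphAut_iff hn)⟩

end PDR
end

section
/- Let G be a finite group that is not an elementary abelian 2-group, and let a ∈ G be an element of order o ≥ 3. Suppose S, K ⊆ G with S ∩ K⁻¹ = {1, a}. Consider the bipartite digraph on two copies G₁, G₂ of G with arcs (g₁, (sg)₂) for s ∈ S and (g₂, (kg)₁) for k ∈ K. Then the undirected edges of this digraph (pairs joined by arcs in both directions) form a disjoint union of cycles, each of length 2o. -/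
/-!
An undirected edge joins `g₁` and `h₂` exactly when `h g⁻¹ ∈ S ∩ K⁻¹ = {1, a}`, so the
undirected graph is the bipartite graph joining `g₁` to `(tg)₂` for `t ∈ {1, a}`. Every vertex
has the two neighbours given by `t = 1` and `t = a`. Because `1` is among the `t`, each `g₁` is
joined to `g₂`, and `g₁ — (ag)₂ — (ag)₁` is a path, so the component of `g₁` is the coset
`⟨a⟩g` taken on both sides, which has `2o` vertices.
-/

namespace PDR

open SimpleGraph

section BiCayley

variable {G : Type*} [Group G]

def biCayleyGraph (T : Set G) : SimpleGraph (G × Bool) :=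
  SimpleGraph.fromRel fun p q => p.2 = false ∧ q.2 = true ∧ q.1 * p.1⁻¹ ∈ T

variable {T : Set G}

theorem biCayleyGraph_adj_false_true {g h : G} :
    (biCayleyGraph T).Adj (g, false) (h, true) ↔ h * g⁻¹ ∈ T := by
  simp [biCayleyGraph]

theorem biCayleyGraph_adj_true_false {g h : G} :
    (biCayleyGraph T).Adj (g, true) (h, false) ↔ g * h⁻¹ ∈ T := by
  rw [adj_comm, biCayleyGraph_adj_false_true]

theorem biCayleyGraph_not_adj_same {g h : G} {b : Bool} :
    ¬ (biCayleyGraph T).Adj (g, b) (h, b) := by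
  cases b <;> simp [biCayleyGraph]

theorem biCayleyGraph_neighborSet_false (g : G) :
    (biCayleyGraph T).neighborSet (g, false) = (fun t => (t * g, true)) '' T := by
  ext ⟨h, c⟩
  cases c
  · simp [biCayleyGraph_not_adj_same]
  · simp only [mem_neighborSet, biCayleyGraph_adj_false_true, Set.mem_image, Prod.mk.injEq,
      and_true]
    exact ⟨fun h => ⟨_, h, inv_mul_cancel_right _ _⟩, by rintro ⟨t, ht, rfl⟩; simpa using ht⟩

theorem biCayleyGraph_neighborSet_true (g : G) :
    (biCayleyGraph T).neighborSet (g, true) = (fun t => (t⁻¹ * g, false)) '' T := by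
  ext ⟨h, c⟩
  cases c
  · simp only [mem_neighborSet, biCayleyGraph_adj_true_false, Set.mem_image, Prod.mk.injEq,
      and_true]
    exact ⟨fun h => ⟨_, h, by group⟩, by rintro ⟨t, ht, rfl⟩; simpa using ht⟩
  · simp [biCayleyGraph_not_adj_same]

theorem biCayleyGraph_ncard_neighborSet (v : G × Bool) :
    ((biCayleyGraph T).neighborSet v).ncard = T.ncard := by
  obtain ⟨g, _ | _⟩ := v
  · rw [biCayleyGraph_neighborSet_false]
    exact Set.ncard_image_of_injective _ fun s t h => by simpa using h
  · rw [biCayleyGraph_neighborSet_true]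
    exact Set.ncard_image_of_injective _ fun s t h => by simpa using h

theorem biCayleyGraph_adj_mul_inv_mem_closure {p q : G × Bool}
    (h : (biCayleyGraph T).Adj p q) : q.1 * p.1⁻¹ ∈ Subgroup.closure T := by
  obtain ⟨g, _ | _⟩ := p <;> obtain ⟨k, _ | _⟩ := q
  · exact absurd h biCayleyGraph_not_adj_same
  · exact Subgroup.subset_closure (biCayleyGraph_adj_false_true.mp h)
  · rw [← inv_inv (k * g⁻¹), mul_inv_rev, inv_inv]
    exact inv_mem (Subgroup.subset_closure (biCayleyGraph_adj_true_false.mp h))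
  · exact absurd h biCayleyGraph_not_adj_same

theorem biCayleyGraph_reachable_mul_inv_mem_closure {p q : G × Bool}
    (h : (biCayleyGraph T).Reachable p q) : q.1 * p.1⁻¹ ∈ Subgroup.closure T := by
  rw [reachable_iff_reflTransGen] at h
  induction h with
  | refl => simp
  | tail _ hadj ih =>
    simpa [mul_assoc] using mul_mem (biCayleyGraph_adj_mul_inv_mem_closure hadj) ih

variable (hT : (1 : G) ∈ T)
include hT

theorem biCayleyGraph_reachable_swap (g : G) (b c : Bool) :
    (biCayleyGraph T).Reachable (g, b) (g, c) := by
  have hedge : (biCayleyGraph T).Reachable (g, false) (g, true) :=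
    (biCayleyGraph_adj_false_true.mpr (by simpa using hT)).reachable
  cases b <;> cases c
  exacts [.rfl, hedge, hedge.symm, .rfl]

/-- Since `1 ∈ T`, the path `(g, false) — (t * g, true) — (t * g, false)` translates by `t`. -/
theorem biCayleyGraph_reachable_mul_of_mem_closure {x : G} (hx : x ∈ Subgroup.closure T)
    (g : G) :
    (biCayleyGraph T).Reachable (g, false) (x * g, false) := by
  induction hx using Subgroup.closure_induction generalizing g with
  | mem t ht =>
    exact (biCayleyGraph_adj_false_true.mpr (by simpa using ht)).reachable.trans
      (biCayleyGraph_reachable_swap hT _ _ _)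
  | one => simp
  | mul x y _ _ hx hy => simpa [mul_assoc] using (hy g).trans (hx (y * g))
  | inv x _ hx => simpa using (hx (x⁻¹ * g)).symm

theorem biCayleyGraph_reachable_iff {p q : G × Bool} :
    (biCayleyGraph T).Reachable p q ↔ q.1 * p.1⁻¹ ∈ Subgroup.closure T := by
  refine ⟨biCayleyGraph_reachable_mul_inv_mem_closure, fun h => ?_⟩
  obtain ⟨g, b⟩ := p
  obtain ⟨k, c⟩ := q
  have hmid := biCayleyGraph_reachable_mul_of_mem_closure hT h g
  rw [inv_mul_cancel_right] at hmid
  exact (biCayleyGraph_reachable_swap hT g b false).trans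
    (hmid.trans (biCayleyGraph_reachable_swap hT k false c))

theorem biCayleyGraph_ncard_supp (v : G × Bool) :
    ((biCayleyGraph T).connectedComponentMk v).supp.ncard =
      2 * Nat.card (Subgroup.closure T) := by
  have hsupp : ((biCayleyGraph T).connectedComponentMk v).supp =
      ((· * v.1) '' (Subgroup.closure T : Set G)) ×ˢ Set.univ := by
    ext ⟨x, b⟩
    rw [ConnectedComponent.mem_supp_iff, ConnectedComponent.eq, reachable_comm,
      biCayleyGraph_reachable_iff hT]
    simp
  rw [hsupp, Set.ncard_prod, Set.ncard_image_of_injective _ (mul_left_injective v.1),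
    Set.ncard_univ, Nat.card_eq_fintype_card, Fintype.card_bool, ← Nat.card_coe_set_eq,
    mul_comm, SetLike.coe_sort_coe]

end BiCayley

theorem eq_biCayleyGraph_inter_inv {G : Type*} [Group G] {S K : Set G}
    {U : SimpleGraph (G × Bool)}
    (hU : ∀ p q : G × Bool, U.Adj p q ↔
      ((p.2 = false ∧ q.2 = true ∧ q.1 * p.1⁻¹ ∈ S ∧ p.1 * q.1⁻¹ ∈ K) ∨
       (p.2 = true ∧ q.2 = false ∧ p.1 * q.1⁻¹ ∈ S ∧ q.1 * p.1⁻¹ ∈ K))) :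
    U = biCayleyGraph (S ∩ K⁻¹) := by
  ext p q
  obtain ⟨g, _ | _⟩ := p <;> obtain ⟨k, _ | _⟩ := q <;> simp [hU, biCayleyGraph]

theorem statement12_general (G : Type) [Group G]
    (a : G) (ho : 3 ≤ orderOf a)
    (S K : Set G) (hSK : S ∩ K⁻¹ = {1, a}) :
    ∀ U : SimpleGraph (G × Bool),
      (∀ p q : G × Bool, U.Adj p q ↔
        ((p.2 = false ∧ q.2 = true ∧ q.1 * p.1⁻¹ ∈ S ∧ p.1 * q.1⁻¹ ∈ K) ∨
         (p.2 = true ∧ q.2 = false ∧ p.1 * q.1⁻¹ ∈ S ∧ q.1 * p.1⁻¹ ∈ K))) →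
      (∀ v : G × Bool, (U.neighborSet v).ncard = 2) ∧
      (∀ v : G × Bool, (U.connectedComponentMk v).supp.ncard = 2 * orderOf a) := by
  intro U hU
  rw [eq_biCayleyGraph_inter_inv hU, hSK]
  have ha : a ≠ 1 := by
    rintro rfl
    simp at ho
  refine ⟨fun v => ?_, fun v => ?_⟩
  · rw [biCayleyGraph_ncard_neighborSet, Set.ncard_pair ha.symm]
  · rw [biCayleyGraph_ncard_supp (Set.mem_insert 1 _) v, Subgroup.closure_insert_one,
      ← Subgroup.zpowers_eq_closure, Nat.card_zpowers]

/-- in the bipartite digraph on two copies of `G` with arcs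
`g₁ → (sg)₂` (`s ∈ S`) and `g₂ → (kg)₁` (`k ∈ K`), where `S ∩ K⁻¹ = {1, a}` and
`a` has order `o ≥ 3` (in a group that is not elementary abelian of exponent 2),
the undirected edges (pairs of opposite arcs) form a disjoint union of cycles of
length `2o`: the undirected-edge graph is `2`-regular and every connected component
has exactly `2o` vertices. -/
theorem statement12 (G : Type) [Group G] [Finite G]
    (h2 : ¬ ∀ g : G, g ^ 2 = 1) (a : G) (ho : 3 ≤ orderOf a)
    (S K : Set G) (hSK : S ∩ K⁻¹ = {1, a}) :
    ∀ U : SimpleGraph (G × Bool),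
      (∀ p q : G × Bool, U.Adj p q ↔
        ((p.2 = false ∧ q.2 = true ∧ q.1 * p.1⁻¹ ∈ S ∧ p.1 * q.1⁻¹ ∈ K) ∨
         (p.2 = true ∧ q.2 = false ∧ p.1 * q.1⁻¹ ∈ S ∧ q.1 * p.1⁻¹ ∈ K))) →
      (∀ v : G × Bool, (U.neighborSet v).ncard = 2) ∧
      (∀ v : G × Bool, (U.connectedComponentMk v).supp.ncard = 2 * orderOf a) :=
  statement12_general G a ho S K hSK

end PDR
end

section
/- Fix n ≥ 3 and let G = ℤ/2ℤ × ℤ/2ℤ = ⟨a⟩ × ⟨b⟩. In the n-Cayley digraph Γ with T_{0,1} = {1}, T_{1,0} = {a}, T_{1,2} = {b}, T_{2,1} = {a}, T_{i,i+1} = T_{i+1,i} = {1} for i ∉ {0,1}, and all other connection sets empty: every vertex of G₁ = G × {1} is incident to no undirected edge, while for every i ≠ 1, every vertex of G_i is incident to at least one undirected edge. Consequently every automorphism of Γ fixes G₁ setwise. -/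
namespace PDR

/-- in the digraph above, no vertex of `G₁` is incident to an
undirected edge (a pair of opposite arcs), while every vertex of `G_i`, `i ≠ 1`,
is incident to at least one; hence every automorphism fixes `G₁` setwise. -/
theorem statement18 (n : ℕ) (hn : 3 ≤ n) :
    let Γ := nCay GV4 n (T6 n)
    (∀ p : GV4 × ZMod n, p.2 = 1 → ∀ q : GV4 × ZMod n, ¬ (Γ.Adj p q ∧ Γ.Adj q p)) ∧
    (∀ p : GV4 × ZMod n, p.2 ≠ 1 → ∃ q : GV4 × ZMod n, Γ.Adj p q ∧ Γ.Adj q p) ∧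
    (∀ σ : Equiv.Perm (GV4 × ZMod n), IsDigraphAut Γ σ →
       ∀ p : GV4 × ZMod n, p.2 = 1 → (σ p).2 = 1) := by
  intro Γ
  haveI : Fact (1 < n) := ⟨by omega⟩
  have h01 : (0:ZMod n) ≠ 1 := zero_ne_one
  have h20 : (2:ZMod n) ≠ 0 := by
    intro h
    have := Nat.le_of_dvd (by norm_num)
      ((ZMod.natCast_eq_zero_iff 2 n).mp (by exact_mod_cast h))
    omega
  have h21 : (2:ZMod n) ≠ 1 := by
    intro h
    have h' : (1:ZMod n) + 1 = 0 + 1 := by rw [one_add_one_eq_two, zero_add]; exact h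
    exact h01 (add_right_cancel h').symm
  have h13 : (1:ZMod n) ≠ 2 + 1 := by
    intro h
    have h' : (2:ZMod n) + 1 = 0 + 1 := by rw [zero_add]; exact h.symm
    exact h20 (add_right_cancel h')
  have hneg0 : (-1:ZMod n) ≠ 0 := by
    intro h; exact h01 (neg_eq_zero.mp h).symm
  have hneg1 : (-1:ZMod n) ≠ 1 := by
    intro h
    apply h20
    have h2 : (-1:ZMod n) + 1 = 1 + 1 := by rw [h]
    rw [← one_add_one_eq_two, ← h2, neg_add_cancel]
  -- T6 values
  have TA : T6 n 1 0 = {aV4} := by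
    unfold T6
    rw [if_neg, if_neg, if_pos ⟨rfl, rfl⟩]
    · rintro ⟨h, -⟩; exact h01 h.symm
    · rintro (⟨-, -, h⟩ | ⟨-, h, -⟩) <;> exact h rfl
  have TB : T6 n 0 1 = ({1} : Set GV4) := by
    unfold T6
    rw [if_neg, if_pos ⟨rfl, rfl⟩]
    rintro (⟨-, h, -⟩ | ⟨-, -, h⟩) <;> exact h rfl
  have TC : T6 n 1 2 = {bV4} := by
    unfold T6
    rw [if_neg, if_neg, if_neg, if_pos ⟨rfl, rfl⟩]
    · rintro ⟨-, h⟩; exact h20 h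
    · rintro ⟨h, -⟩; exact h01 h.symm
    · rintro (⟨-, -, h⟩ | ⟨h, -, -⟩)
      · exact h rfl
      · exact h13 h
  have TD : T6 n 2 1 = {aV4} := by
    unfold T6
    rw [if_neg, if_neg, if_neg, if_neg, if_pos ⟨rfl, rfl⟩]
    · rintro ⟨h, -⟩; exact h21 h
    · rintro ⟨h, -⟩; exact h21 h
    · rintro ⟨h, -⟩; exact h20 h
    · rintro (⟨h, -, -⟩ | ⟨-, -, h⟩)
      · exact h13 h
      · exact h rfl
  have TE : ∀ j : ZMod n, j ≠ 0 → j ≠ 2 → T6 n 1 j = ∅ := by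
    intro j hj0 hj2
    unfold T6
    rw [if_neg, if_neg, if_neg, if_neg, if_neg]
    · rintro ⟨h, -⟩; exact h21 h.symm
    · rintro ⟨-, h⟩; exact hj2 h
    · rintro ⟨-, h⟩; exact hj0 h
    · rintro ⟨h, -⟩; exact h01 h.symm
    · rintro (⟨-, -, h⟩ | ⟨h, hj0', -⟩)
      · exact h rfl
      · apply hj0'
        have h' : j + 1 = 0 + 1 := by rw [zero_add]; exact h.symm
        exact add_right_cancel h'
  have TF1 : ∀ i : ZMod n, i ≠ 0 → i ≠ 1 → T6 n i (i+1) = ({1} : Set GV4) := by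
    intro i hi0 hi1
    unfold T6
    rw [if_pos (Or.inl ⟨rfl, hi0, hi1⟩)]
  have TF2 : ∀ i : ZMod n, i ≠ 0 → i ≠ 1 → T6 n (i+1) i = ({1} : Set GV4) := by
    intro i hi0 hi1
    unfold T6
    rw [if_pos (Or.inr ⟨rfl, hi0, hi1⟩)]
  have TG1 : T6 n 0 (-1) = ({1} : Set GV4) := by
    unfold T6
    rw [if_pos (Or.inr ⟨(neg_add_cancel 1).symm, hneg0, hneg1⟩)]
  have TG2 : T6 n (-1) 0 = ({1} : Set GV4) := by
    unfold T6
    rw [if_pos (Or.inl ⟨(neg_add_cancel 1).symm, hneg0, hneg1⟩)]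
  -- Part 1
  have part1 : ∀ p : GV4 × ZMod n, p.2 = 1 → ∀ q : GV4 × ZMod n,
      ¬ (Γ.Adj p q ∧ Γ.Adj q p) := by
    rintro ⟨x, i⟩ hi ⟨y, j⟩ ⟨h1, h2⟩
    simp only at hi
    subst hi
    have e1 : y * x⁻¹ ∈ T6 n 1 j := h1
    have e2 : x * y⁻¹ ∈ T6 n j 1 := h2
    by_cases hj0 : j = 0
    · subst hj0
      rw [TA, Set.mem_singleton_iff] at e1
      rw [TB, Set.mem_singleton_iff] at e2
      have hx : x = y := mul_inv_eq_one.mp e2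
      have : aV4 = 1 := by rw [← e1, ← hx]; simp
      exact absurd this (by decide)
    · by_cases hj2 : j = 2
      · subst hj2
        rw [TC, Set.mem_singleton_iff] at e1
        rw [TD, Set.mem_singleton_iff] at e2
        have : bV4 * aV4 = 1 := by rw [← e1, ← e2]; group
        exact absurd this (by decide)
      · rw [TE j hj0 hj2] at e1
        exact e1
  -- Part 2
  have part2 : ∀ p : GV4 × ZMod n, p.2 ≠ 1 →
      ∃ q : GV4 × ZMod n, Γ.Adj p q ∧ Γ.Adj q p := by
    rintro ⟨x, i⟩ hi
    simp only at hi
    by_cases hi0 : i = 0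
    · subst hi0
      refine ⟨(x, -1), ?_, ?_⟩
      · show x * x⁻¹ ∈ T6 n 0 (-1)
        rw [TG1]; simp
      · show x * x⁻¹ ∈ T6 n (-1) 0
        rw [TG2]; simp
    · refine ⟨(x, i + 1), ?_, ?_⟩
      · show x * x⁻¹ ∈ T6 n i (i + 1)
        rw [TF1 i hi0 hi]; simp
      · show x * x⁻¹ ∈ T6 n (i + 1) i
        rw [TF2 i hi0 hi]; simp
  refine ⟨part1, part2, ?_⟩
  intro σ hσ p hp
  by_contra h
  obtain ⟨q, hq1, hq2⟩ := part2 (σ p) h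
  apply part1 p hp (σ⁻¹ q)
  constructor
  · exact (hσ p (σ⁻¹ q)).mp (by simpa using hq1)
  · exact (hσ (σ⁻¹ q) p).mp (by simpa using hq2)

end PDR
end
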